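/- arXiv:1410.1333 — 2 statements merged into one kernel-verified Lean document; each statement's English description precedes it below -/
import Mathlib

section
/- Let q be a prime power, let k, m be positive integers, and let C ⊆ Mat(k×m, F_q) be a non-zero F_q-linear subspace. Then minrk(C) ≤ maxrk(C^⊥) + 1. -/
/-
Set `s = maxrk C^⊥ + 1` and suppose every non-zero codeword of `C` had rank greater than `s`.
Let `V ⊆ Mat(k×s)` be the image of `C^⊥` under truncation to the first `s` columns. A matrix `P`
orthogonal to `V` pads with zero columns to a matrix orthogonal to `C^⊥`, hence to a codeword of
`C = C^⊥⊥` of rank at most `s`; so `P = 0`, `V^⊥ = 0` and `V` is everything. In particular some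
`N ∈ C^⊥` truncates to a matrix of rank `s`, so `rk N ≥ s > maxrk C^⊥`, a contradiction.
-/
open Matrix BigOperators

/-- The Gaussian (q-)binomial coefficient, defined via the q-Pascal recursion. -/
def qBinom (q : ℕ) : ℕ → ℕ → ℕ
  | _, 0 => 1
  | 0, _ + 1 => 0
  | s + 1, t + 1 => qBinom q s t + q ^ (t + 1) * qBinom q s (t + 1)

variable {F : Type} [Field F]

/-- The dual of a rank-metric code with respect to the trace product. -/
def dualCode {k m : ℕ} (C : Submodule F (Matrix (Fin k) (Fin m) F)) :
    Submodule F (Matrix (Fin k) (Fin m) F) where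
  carrier := {N | ∀ M ∈ C, Matrix.trace (M * Nᵀ) = 0}
  add_mem' := by
    intro a b ha hb M hM
    rw [Set.mem_setOf_eq] at *
    rw [Matrix.transpose_add, Matrix.mul_add, Matrix.trace_add, ha M hM, hb M hM, add_zero]
  zero_mem' := by
    intro M hM
    simp
  smul_mem' := by
    intro c N hN M hM
    rw [Set.mem_setOf_eq] at *
    rw [Matrix.transpose_smul, Matrix.mul_smul, Matrix.trace_smul, hN M hM, smul_zero]

/-- Minimum rank of a code. -/
noncomputable def minrk {k m : ℕ} (C : Submodule F (Matrix (Fin k) (Fin m) F)) : ℕ :=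
  sInf {r | ∃ M ∈ C, M ≠ 0 ∧ M.rank = r}

/-- Maximum rank of a code. -/
noncomputable def maxrk {k m : ℕ} (C : Submodule F (Matrix (Fin k) (Fin m) F)) : ℕ :=
  sSup {r | ∃ M ∈ C, M.rank = r}

/-- Rank distribution of a code. -/
noncomputable def rankDist {k m : ℕ} (C : Submodule F (Matrix (Fin k) (Fin m) F)) (i : ℕ) : ℕ :=
  Nat.card {M : Matrix (Fin k) (Fin m) F // M ∈ C ∧ M.rank = i}

/-- MRD codes. -/
def IsMRD {k m : ℕ} (C : Submodule F (Matrix (Fin k) (Fin m) F)) : Prop :=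
  C = ⊥ ∨ Module.finrank F ↥C = max k m * (min k m - minrk C + 1)

/-- Optimal anticodes. -/
def IsOptimalAnticode {k m : ℕ} (C : Submodule F (Matrix (Fin k) (Fin m) F)) : Prop :=
  Module.finrank F ↥C = max k m * maxrk C

/-- The subspace of matrices whose column space is contained in `U`. -/
def matIn {k : ℕ} (m : ℕ) (U : Submodule F (Fin k → F)) :
    Submodule F (Matrix (Fin k) (Fin m) F) where
  carrier := {M | ∀ j, Mᵀ j ∈ U}
  add_mem' := by
    intro a b ha hb j
    rw [Matrix.transpose_add]
    exact U.add_mem (ha j) (hb j)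
  zero_mem' := by
    intro j
    rw [Matrix.transpose_zero]
    exact U.zero_mem
  smul_mem' := by
    intro c M hM j
    rw [Matrix.transpose_smul]
    exact U.smul_mem c (hM j)

/-- The dual of a subspace of `Fin k → K` with respect to the standard inner product. -/
def dualPi {K : Type} [Field K] {k : ℕ} (C : Submodule K (Fin k → K)) :
    Submodule K (Fin k → K) where
  carrier := {β | ∀ α ∈ C, ∑ i, α i * β i = 0}
  add_mem' := by
    intro a b ha hb α hα
    rw [Set.mem_setOf_eq] at *
    have : ∑ i, α i * (a + b) i = (∑ i, α i * a i) + ∑ i, α i * b i := by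
      rw [← Finset.sum_add_distrib]
      exact Finset.sum_congr rfl fun i _ => by simp [mul_add]
    rw [this, ha α hα, hb α hα, add_zero]
  zero_mem' := by
    intro α hα
    simp
  smul_mem' := by
    intro c β hβ α hα
    rw [Set.mem_setOf_eq] at *
    have : ∑ i, α i * (c • β) i = c * ∑ i, α i * β i := by
      rw [Finset.mul_sum]
      exact Finset.sum_congr rfl fun i _ => by simp [smul_eq_mul]; ring
    rw [this, hβ α hα, mul_zero]

/-- The matrix associated to a vector `α ∈ K^k` with respect to a basis `G` of `K` over `F`. -/
noncomputable def matOfBasis (F K : Type) [Field F] [Field K] [Algebra F K]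
    (k m : ℕ) (G : Module.Basis (Fin m) F K) :
    (Fin k → K) →ₗ[F] Matrix (Fin k) (Fin m) F where
  toFun α := Matrix.of fun i j => G.repr (α i) j
  map_add' α β := by
    ext i j
    simp
  map_smul' c α := by
    ext i j
    simp

/-- The `h`-trace of a `k × m` matrix (`k ≤ m`). -/
def hTrace {k m : ℕ} (hkm : k ≤ m) (h : ℕ) (M : Matrix (Fin k) (Fin m) F) : F :=
  ∑ i : Fin k, if (i : ℕ) < h then M i (Fin.castLE hkm i) else 0

variable {k m s : ℕ}

def traceProduct (k m : ℕ) : LinearMap.BilinForm F (Matrix (Fin k) (Fin m) F) :=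
  LinearMap.mk₂ F (fun M N => trace (M * Nᵀ))
    (fun M M' N => by rw [Matrix.add_mul, trace_add])
    (fun c M N => by rw [Matrix.smul_mul, trace_smul])
    (fun M N N' => by rw [transpose_add, Matrix.mul_add, trace_add])
    (fun c M N => by rw [transpose_smul, Matrix.mul_smul, trace_smul])

@[simp]
lemma traceProduct_apply (M N : Matrix (Fin k) (Fin m) F) :
    traceProduct k m M N = trace (M * Nᵀ) := rfl

lemma traceProduct_isRefl : (traceProduct (F := F) k m).IsRefl := by
  intro M N h
  rw [traceProduct_apply, ← trace_transpose, transpose_mul, transpose_transpose] at h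
  exact h

lemma traceProduct_nondegenerate : (traceProduct (F := F) k m).Nondegenerate := by
  refine (LinearMap.IsRefl.nondegenerate_iff_separatingRight
    (traceProduct_isRefl : LinearMap.IsRefl (traceProduct (F := F) k m))).2 fun N hN => ?_
  ext i j
  simpa [trace_single_mul] using hN (single i j 1)

lemma dualCode_eq_orthogonal (C : Submodule F (Matrix (Fin k) (Fin m) F)) :
    dualCode C = (traceProduct k m).orthogonal C := rfl

lemma dualCode_dualCode (C : Submodule F (Matrix (Fin k) (Fin m) F)) :
    dualCode (dualCode C) = C := by
  rw [dualCode_eq_orthogonal, dualCode_eq_orthogonal]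
  exact LinearMap.BilinForm.orthogonal_orthogonal traceProduct_nondegenerate traceProduct_isRefl C

lemma dualCode_bot : dualCode (⊥ : Submodule F (Matrix (Fin k) (Fin m) F)) = ⊤ := by
  ext N
  simp [dualCode]

lemma minrk_le_rank {C : Submodule F (Matrix (Fin k) (Fin m) F)} {M : Matrix (Fin k) (Fin m) F}
    (hM : M ∈ C) (hM0 : M ≠ 0) : minrk C ≤ M.rank :=
  Nat.sInf_le ⟨M, hM, hM0, rfl⟩

lemma rank_le_maxrk {C : Submodule F (Matrix (Fin k) (Fin m) F)} {M : Matrix (Fin k) (Fin m) F}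
    (hM : M ∈ C) : M.rank ≤ maxrk C :=
  le_csSup ⟨k, by rintro r ⟨N, -, rfl⟩; exact N.rank_le_height⟩ ⟨M, hM, rfl⟩

lemma exists_mul_transpose_eq_one (h : s ≤ m) :
    ∃ J : Matrix (Fin s) (Fin m) F, J * Jᵀ = 1 :=
  ⟨(1 : Matrix (Fin m) (Fin m) F).submatrix (Fin.castLE h) id, by
    rw [transpose_submatrix, transpose_one]
    exact (one_submatrix_mul _ (Equiv.refl _) _).trans (submatrix_one _ (Fin.castLE_injective h))⟩

lemma le_rank_transpose_of_mul_transpose_eq_one {J : Matrix (Fin s) (Fin m) F}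
    (hJ : J * Jᵀ = 1) : s ≤ Jᵀ.rank := by
  simpa [hJ, rank_one] using rank_mul_le_right J Jᵀ

lemma map_dualCode_mulRight_eq_top {C : Submodule F (Matrix (Fin k) (Fin m) F)}
    {J : Matrix (Fin s) (Fin m) F} (hJ : J * Jᵀ = 1)
    (hC : ∀ M ∈ C, M ≠ 0 → s < M.rank) :
    (dualCode C).map (mulRightLinearMap (Fin k) F Jᵀ) = ⊤ := by
  set V := (dualCode C).map (mulRightLinearMap (Fin k) F Jᵀ)
  have hV : dualCode V = ⊥ := by
    refine (Submodule.eq_bot_iff _).2 fun P hP => ?_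
    have hPJ : P * J ∈ C := by
      rw [← dualCode_dualCode C]
      intro N hN
      rw [transpose_mul, ← Matrix.mul_assoc]
      exact hP _ ⟨N, hN, rfl⟩
    have hPJ0 : P * J = 0 := by
      by_contra hne
      exact ((hC _ hPJ hne).trans_le ((rank_mul_le_left P J).trans P.rank_le_width)).false
    rw [← Matrix.mul_one P, ← hJ, ← Matrix.mul_assoc, hPJ0, Matrix.zero_mul]
  rw [← dualCode_dualCode V, hV, dualCode_bot]

lemma exists_mem_dualCode_le_rank {C : Submodule F (Matrix (Fin k) (Fin m) F)}
    (hsk : s ≤ k) (hsm : s ≤ m) (hC : ∀ M ∈ C, M ≠ 0 → s < M.rank) :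
    ∃ N ∈ dualCode C, s ≤ N.rank := by
  obtain ⟨J, hJ⟩ := exists_mul_transpose_eq_one (F := F) hsm
  obtain ⟨J', hJ'⟩ := exists_mul_transpose_eq_one (F := F) hsk
  obtain ⟨N, hN, hNJ⟩ : J'ᵀ ∈ (dualCode C).map (mulRightLinearMap (Fin k) F Jᵀ) := by
    rw [map_dualCode_mulRight_eq_top hJ hC]
    trivial
  refine ⟨N, hN, (le_rank_transpose_of_mul_transpose_eq_one hJ').trans ?_⟩
  rw [← hNJ]
  exact rank_mul_le_left N Jᵀ

theorem stmt_11_general (F : Type) [Field F] (k m : ℕ)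
    (C : Submodule F (Matrix (Fin k) (Fin m) F)) :
    minrk C ≤ maxrk (dualCode C) + 1 := by
  set s := maxrk (dualCode C) + 1
  by_contra! hlt
  obtain ⟨M₀, -, -, hM₀⟩ : ∃ M ∈ C, M ≠ 0 ∧ M.rank = minrk C :=
    Nat.sInf_mem (Nat.nonempty_of_pos_sInf (show 0 < minrk C by omega))
  have hsk : s ≤ k := by have := M₀.rank_le_height; omega
  have hsm : s ≤ m := by have := M₀.rank_le_width; omega
  obtain ⟨N, hN, hsN⟩ := exists_mem_dualCode_le_rank hsk hsm
    fun M hM hM0 => hlt.trans_le (minrk_le_rank hM hM0)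
  have := rank_le_maxrk hN
  omega

/-- The minimum rank of a non-zero code is at most the maximum rank of the dual plus one. -/
theorem stmt_11 (F : Type) [Field F] [Fintype F] (k m : ℕ) (hk : 0 < k) (hm : 0 < m)
    (C : Submodule F (Matrix (Fin k) (Fin m) F)) (hC0 : C ≠ ⊥) :
    minrk C ≤ maxrk (dualCode C) + 1 :=
  stmt_11_general F k m C
end

section
/- Let q be a prime power, let k, m be positive integers, and let C ⊆ Mat(k×m, F_q) be a non-zero MRD code with minimum rank d and rank distribution (A_i)_{i≥0}. Then A_{d+ℓ} > 0 for every integer 0 ≤ ℓ ≤ min{k,m} − d. -/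
open Matrix BigOperators

variable {F : Type} [Field F]

/-! Assume `k ≤ m` (otherwise transpose) and let `d ≤ u ≤ k`. Fix `U ≤ F^k` of dimension `u`.
Since `C` attains the Singleton bound, the matrices of `C` with columns in `U` form a subspace `T`
of dimension at least `m (u - d + 1)`. If `C` had no matrix of rank `u`, every element of `T`
would have its columns in a hyperplane `ker φ` of `U`. By the Singleton bound each hyperplane
carries at most `q ^ (m (u - d))` elements of `C`, and there are fewer than `q ^ u ≤ q ^ m`
non-zero functionals `φ`, so `|T| < q ^ (m (u - d + 1))`, a contradiction. -/

open Module

section Covering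

variable {V : Type*} [AddCommGroup V] [Module F V]

theorem Submodule.exists_le_finrank_eq (p : Submodule F V) {n : ℕ} (hn : n ≤ finrank F p) :
    ∃ W ≤ p, finrank F W = n := by
  obtain ⟨v, hv⟩ := exists_linearIndependent_of_le_finrank hn
  refine ⟨(Submodule.span F (Set.range v)).map p.subtype, Submodule.map_subtype_le _ _, ?_⟩
  rw [Submodule.finrank_map_subtype_eq, finrank_span_eq_card hv, Fintype.card_fin]

theorem Submodule.pow_finrank_le_of_subset_biUnion [Finite F] [FiniteDimensional F V]
    {ι : Type*} (T : Submodule F V) (s : Finset ι) (S : ι → Submodule F V) {e : ℕ}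
    (hS : ∀ i ∈ s, finrank F (S i) ≤ e) (hT : (T : Set V) ⊆ ⋃ i ∈ s, (S i : Set V)) :
    Nat.card F ^ finrank F T ≤ s.card * Nat.card F ^ e := by
  have : Finite V := Module.finite_of_finite F
  have hq : 0 < Nat.card F := Nat.card_pos
  calc Nat.card F ^ finrank F T = (T : Set V).ncard := (natCard_eq_pow_finrank).symm
    _ ≤ (⋃ i ∈ s, (S i : Set V)).ncard := Set.ncard_le_ncard hT
    _ ≤ ∑ i ∈ s, (S i : Set V).ncard := s.set_ncard_biUnion_le _
    _ ≤ ∑ _i ∈ s, Nat.card F ^ e := Finset.sum_le_sum fun i hi => by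
        rw [← Nat.card_coe_set_eq, SetLike.coe_sort_coe, natCard_eq_pow_finrank (K := F)]
        exact Nat.pow_le_pow_right hq (hS i hi)
    _ = s.card * Nat.card F ^ e := by rw [Finset.sum_const, smul_eq_mul]

end Covering

section MatIn

variable {k m : ℕ}

theorem Matrix.rank_pos_of_ne_zero {M : Matrix (Fin k) (Fin m) F} (hM : M ≠ 0) :
    0 < M.rank := by
  rw [Matrix.rank, Nat.pos_iff_ne_zero, Ne, Submodule.finrank_eq_zero, LinearMap.range_eq_bot]
  exact fun h => hM (Matrix.toLin'.map_eq_zero_iff.1 h)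

theorem matIn_mono {U W : Submodule F (Fin k → F)} (h : U ≤ W) : matIn m U ≤ matIn m W :=
  fun _ hM j => h (hM j)

theorem rank_le_finrank_of_mem_matIn {U : Submodule F (Fin k → F)}
    {M : Matrix (Fin k) (Fin m) F} (hM : M ∈ matIn m U) : M.rank ≤ finrank F U := by
  rw [Matrix.rank_eq_finrank_span_cols]
  exact Submodule.finrank_mono (Submodule.span_le.2 (by rintro _ ⟨j, rfl⟩; exact hM j))

variable (m) in
def matInEquiv (U : Submodule F (Fin k → F)) : matIn m U ≃ₗ[F] (Fin m → U) where
  toFun M j := ⟨(M : Matrix (Fin k) (Fin m) F)ᵀ j, M.2 j⟩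
  map_add' _ _ := rfl
  map_smul' _ _ := rfl
  invFun f := ⟨Matrix.of fun i j => (f j : Fin k → F) i, fun j => (f j).2⟩
  left_inv _ := rfl
  right_inv _ := rfl

variable (m) in
theorem finrank_matIn (U : Submodule F (Fin k → F)) :
    finrank F (matIn m U) = m * finrank F U := by
  rw [(matInEquiv m U).finrank_eq, finrank_pi_fintype, Finset.sum_const, Finset.card_univ,
    Fintype.card_fin, smul_eq_mul]

theorem finrank_add_mul_le_of_lt_rank {r : ℕ} {W : Submodule F (Fin k → F)}
    {D : Submodule F (Matrix (Fin k) (Fin m) F)} (hDW : D ≤ matIn m W)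
    (hD : ∀ M ∈ D, M ≠ 0 → r < M.rank) (hr : r ≤ finrank F W) :
    finrank F D + m * r ≤ m * finrank F W := by
  obtain ⟨W', hW'W, hW'⟩ := W.exists_le_finrank_eq hr
  have hdisj : Disjoint D (matIn m W') := by
    refine Submodule.disjoint_def.2 fun M hMD hMW' => ?_
    by_contra hM0
    have := rank_le_finrank_of_mem_matIn hMW'
    have := hD M hMD hM0
    omega
  calc finrank F D + m * r = finrank F ↥(D ⊔ matIn m W') := by
        rw [← hW', ← finrank_matIn, ← Submodule.finrank_sup_add_finrank_inf_eq, hdisj.eq_bot,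
          finrank_bot, add_zero]
    _ ≤ finrank F (matIn m W) := Submodule.finrank_mono (sup_le hDW (matIn_mono hW'W))
    _ = m * finrank F W := finrank_matIn m W

end MatIn

section ExistsRank

variable {k m : ℕ}

theorem exists_dual_ne_zero_mem_matIn_ker {U : Submodule F (Fin k → F)}
    {M : Matrix (Fin k) (Fin m) F} (hM : M ∈ matIn m U) (hrank : M.rank < finrank F U) :
    ∃ φ : Dual F U, φ ≠ 0 ∧ M ∈ matIn m ((LinearMap.ker φ).map U.subtype) := by
  set P := (Submodule.span F (Set.range Mᵀ)).comap U.subtype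
  have hP : finrank F P = M.rank := by
    rw [← Submodule.finrank_map_subtype_eq, Submodule.map_comap_subtype,
      inf_eq_right.2 (Submodule.span_le.2 (by rintro _ ⟨j, rfl⟩; exact hM j)),
      Matrix.rank_eq_finrank_span_cols]
    rfl
  have hPtop : P < ⊤ := lt_top_iff_ne_top.2 fun h => by
    rw [h, finrank_top] at hP
    omega
  obtain ⟨φ, hφ0, hPφ⟩ := P.exists_le_ker_of_lt_top hPtop
  exact ⟨φ, hφ0, fun j => ⟨⟨Mᵀ j, hM j⟩, hPφ (Submodule.subset_span ⟨j, rfl⟩), rfl⟩⟩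

theorem exists_rank_eq_finrank_of_le_matIn [Finite F] {r : ℕ} {U : Submodule F (Fin k → F)}
    {D : Submodule F (Matrix (Fin k) (Fin m) F)} (hDU : D ≤ matIn m U)
    (hD : ∀ M ∈ D, M ≠ 0 → r < M.rank) (hrU : r < finrank F U) (hUm : finrank F U ≤ m)
    (hdim : m * (finrank F U - r) ≤ finrank F D) :
    ∃ M ∈ D, M.rank = finrank F U := by
  classical
  by_contra! hno
  set u := finrank F U
  set q := Nat.card F
  have hq : 1 < q := Finite.one_lt_card
  let W : Dual F U → Submodule F (Fin k → F) := fun φ => (LinearMap.ker φ).map U.subtype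
  have : Fintype (Dual F U) := @Fintype.ofFinite _ (Module.finite_of_finite F)
  let s : Finset (Dual F U) := Finset.univ.erase 0
  have hcover : (D : Set (Matrix (Fin k) (Fin m) F)) ⊆ ⋃ φ ∈ s, ↑(D ⊓ matIn m (W φ)) := by
    intro M hM
    have hMU := hDU hM
    obtain ⟨φ, hφ0, hMφ⟩ := exists_dual_ne_zero_mem_matIn_ker hMU
      (lt_of_le_of_ne (rank_le_finrank_of_mem_matIn hMU) (hno M hM))
    exact Set.mem_biUnion (Finset.mem_erase.2 ⟨hφ0, Finset.mem_univ _⟩) ⟨hM, hMφ⟩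
  have hpiece : ∀ φ ∈ s, finrank F ↥(D ⊓ matIn m (W φ)) ≤ m * (u - 1 - r) := by
    intro φ hφ
    have hWφ : finrank F (W φ) + 1 = u := by
      rw [Submodule.finrank_map_subtype_eq]
      exact φ.finrank_ker_add_one_of_ne_zero (Finset.ne_of_mem_erase hφ)
    have := finrank_add_mul_le_of_lt_rank (W := W φ) inf_le_right
      (fun M hM => hD M (Submodule.mem_inf.1 hM).1) (r := r) (by omega)
    rw [show u - 1 - r = finrank F (W φ) - r by omega, Nat.mul_sub]
    omega
  have hs : s.card < q ^ u := by
    calc s.card < Finset.univ.card := Finset.card_erase_lt_of_mem (Finset.mem_univ _)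
      _ = q ^ u := by
        rw [Finset.card_univ, Fintype.card_eq_nat_card, natCard_eq_pow_finrank (K := F),
          Subspace.dual_finrank_eq]
  have hexp : m * (u - r) = m + m * (u - 1 - r) := by
    rw [show u - r = u - 1 - r + 1 by omega, mul_add_one, add_comm]
  have : q ^ (m * (u - r)) < q ^ (m * (u - r)) := calc
    q ^ (m * (u - r)) ≤ q ^ finrank F D := Nat.pow_le_pow_right (by omega) hdim
    _ ≤ s.card * q ^ (m * (u - 1 - r)) := D.pow_finrank_le_of_subset_biUnion s _ hpiece hcover
    _ < q ^ u * q ^ (m * (u - 1 - r)) := Nat.mul_lt_mul_of_pos_right hs (by positivity)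
    _ ≤ q ^ m * q ^ (m * (u - 1 - r)) :=
        Nat.mul_le_mul_right _ (Nat.pow_le_pow_right (by omega) hUm)
    _ = q ^ (m * (u - r)) := by rw [hexp, pow_add]
  exact lt_irrefl _ this

theorem exists_rank_eq_of_le [Finite F] {r : ℕ} (hkm : k ≤ m)
    {C : Submodule F (Matrix (Fin k) (Fin m) F)} (hC : ∀ M ∈ C, M ≠ 0 → r < M.rank)
    (hdim : m * (k - r) ≤ finrank F C) {u : ℕ} (hru : r < u) (huk : u ≤ k) :
    ∃ M ∈ C, M.rank = u := by
  obtain ⟨U, -, hU⟩ := (⊤ : Submodule F (Fin k → F)).exists_le_finrank_eq (n := u)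
    (by rwa [finrank_top, finrank_fin_fun])
  have hT : m * (u - r) ≤ finrank F ↥(C ⊓ matIn m U) := by
    have hsup : finrank F ↥(C ⊔ matIn m U) ≤ m * k := by
      have := Submodule.finrank_le (C ⊔ matIn m U)
      rwa [finrank_matrix, Fintype.card_fin, Fintype.card_fin, finrank_self, mul_one,
        mul_comm] at this
    have hsum := Submodule.finrank_sup_add_finrank_inf_eq C (matIn m U)
    have hsplit : m * (k - r) + m * u = m * (u - r) + m * k := by
      rw [← mul_add, ← mul_add]
      congr 1
      omega
    rw [finrank_matIn, hU] at hsum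
    omega
  obtain ⟨M, hM, hMu⟩ := exists_rank_eq_finrank_of_le_matIn inf_le_right
    (fun M hM => hC M (Submodule.mem_inf.1 hM).1) (hU ▸ hru) (hU ▸ huk.trans hkm) (hU ▸ hT)
  exact ⟨M, (Submodule.mem_inf.1 hM).1, hMu.trans hU⟩

theorem exists_rank_eq [Finite F] {r : ℕ} {C : Submodule F (Matrix (Fin k) (Fin m) F)}
    (hC : ∀ M ∈ C, M ≠ 0 → r < M.rank) (hdim : max k m * (min k m - r) ≤ finrank F C)
    {u : ℕ} (hru : r < u) (hu : u ≤ min k m) : ∃ M ∈ C, M.rank = u := by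
  rcases le_total k m with hkm | hmk
  · rw [max_eq_right hkm, min_eq_left hkm] at *
    exact exists_rank_eq_of_le hkm hC hdim hru hu
  · rw [max_eq_left hmk, min_eq_right hmk] at *
    let τ := Matrix.transposeLinearEquiv (Fin k) (Fin m) F F
    obtain ⟨_, ⟨M, hM, rfl⟩, hMu⟩ := exists_rank_eq_of_le hmk (C := C.map τ.toLinearMap)
      (by
        rintro _ ⟨M, hM, rfl⟩ hM0
        change r < Mᵀ.rank
        rw [Matrix.rank_transpose]
        exact hC M hM (by rintro rfl; simp at hM0))
      (by rwa [LinearEquiv.finrank_map_eq]) hru hu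
    change Mᵀ.rank = u at hMu
    rw [Matrix.rank_transpose] at hMu
    exact ⟨M, hM, hMu⟩

end ExistsRank

theorem stmt_12_general (F : Type) [Field F] [Fintype F] (k m : ℕ)
    (C : Submodule F (Matrix (Fin k) (Fin m) F)) (hC : IsMRD C) (hC0 : C ≠ ⊥)
    (d : ℕ) (hd : minrk C = d) (l : ℕ) (hl : l ≤ min k m - d) :
    0 < rankDist C (d + l) := by
  obtain ⟨M₀, hM₀, hM₀0⟩ := Submodule.exists_mem_ne_zero_of_ne_bot hC0
  obtain ⟨M₁, hM₁, hM₁0, hM₁d⟩ : ∃ M ∈ C, M ≠ 0 ∧ M.rank = d :=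
    hd ▸ Nat.sInf_mem (s := {r | ∃ M ∈ C, M ≠ 0 ∧ M.rank = r})
      ⟨M₀.rank, M₀, hM₀, hM₀0, rfl⟩
  have hd_pos : 0 < d := hM₁d ▸ Matrix.rank_pos_of_ne_zero hM₁0
  have hd_le : d ≤ min k m := hM₁d ▸ le_min M₁.rank_le_height M₁.rank_le_width
  have hrank : ∀ M ∈ C, M ≠ 0 → d - 1 < M.rank := fun M hM hM0 => by
    have : d ≤ M.rank := hd ▸ Nat.sInf_le ⟨M, hM, hM0, rfl⟩
    omega
  have hdim : max k m * (min k m - (d - 1)) ≤ finrank F C := by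
    rw [hC.resolve_left hC0, hd, show min k m - (d - 1) = min k m - d + 1 by omega]
  obtain ⟨M, hM, hMr⟩ := exists_rank_eq hrank hdim (u := d + l) (by omega) (by omega)
  have : Nonempty {M : Matrix (Fin k) (Fin m) F // M ∈ C ∧ M.rank = d + l} := ⟨⟨M, hM, hMr⟩⟩
  exact Nat.card_pos

/-- A non-zero MRD code with minimum rank `d` has non-zero rank distribution in every
rank `d + l` with `0 ≤ l ≤ min {k, m} - d`. -/
theorem stmt_12 (F : Type) [Field F] [Fintype F] (k m : ℕ) (hk : 0 < k) (hm : 0 < m)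
    (C : Submodule F (Matrix (Fin k) (Fin m) F)) (hC : IsMRD C) (hC0 : C ≠ ⊥)
    (d : ℕ) (hd : minrk C = d) (l : ℕ) (hl : l ≤ min k m - d) :
    0 < rankDist C (d + l) :=
  stmt_12_general F k m C hC hC0 d hd l hl
end
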